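/- Among all probability distributions on a finite product space having prescribed marginals on subsets A_1,...,A_r, any distribution of the product form Q(x) = ∏_k f_k(x_{A_k}) satisfying those marginal constraints achieves the maximum entropy: for any other distribution P with the same marginals, S[P] ≤ S[Q], with equality iff P = Q. -/

import Mathlib

/-!
Since `f k` depends only on the coordinates in `A k` and `log Q = ∑ k, log (f k)` wherever
`Q > 0`, the expectation of `log Q` is determined by the marginals on the `A k`; as `P ≪ Q`
this gives the cross-entropy identity `∑ P log Q = ∑ Q log Q`. Hence `S[Q] - S[P]` is the
Kullback–Leibler divergence of `P` from `Q`, which is nonnegative and vanishes only at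
`P = Q` (Gibbs' inequality).
-/

open Finset

/-- Shannon entropy (base 2). -/
noncomputable def H {α : Type*} [Fintype α] (p : α → ℝ) : ℝ :=
  -∑ x, p x * Real.logb 2 (p x)

/-- Marginal of `P` on the set of coordinates `A`. -/
noncomputable def margA {M : ℕ} {X : Fin M → Type*} [∀ i, Fintype (X i)]
    [∀ i, DecidableEq (X i)] (P : (∀ i, X i) → ℝ) (A : Finset (Fin M))
    (z : ∀ i, X i) : ℝ :=
  ∑ y, if (∀ i ∈ A, y i = z i) then P y else 0

open Real InformationTheory

section Gibbs

lemma mul_log_sub_log_add_sub_eq_mul_klFun {p q : ℝ} (hq : q ≠ 0) :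
    p * (log p - log q) + q - p = q * klFun (p / q) := by
  rcases eq_or_ne p 0 with rfl | hp
  · simp [klFun]
  · rw [klFun, log_div hp hq]
    field_simp

lemma mul_log_sub_log_add_sub_nonneg {p q : ℝ} (hp : 0 ≤ p) (hq : 0 ≤ q)
    (hpq : 0 < p → 0 < q) : 0 ≤ p * (log p - log q) + q - p := by
  rcases hq.eq_or_lt with rfl | hq
  · obtain rfl : p = 0 := by by_contra hp'; exact (hpq (hp.lt_of_ne' hp')).false
    simp
  · rw [mul_log_sub_log_add_sub_eq_mul_klFun hq.ne']
    exact mul_nonneg hq.le (klFun_nonneg (div_nonneg hp hq.le))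

lemma mul_log_sub_log_add_sub_eq_zero_iff {p q : ℝ} (hp : 0 ≤ p) (hq : 0 ≤ q)
    (hpq : 0 < p → 0 < q) : p * (log p - log q) + q - p = 0 ↔ p = q := by
  rcases hq.eq_or_lt with rfl | hq
  · obtain rfl : p = 0 := by by_contra hp'; exact (hpq (hp.lt_of_ne' hp')).false
    simp
  · rw [mul_log_sub_log_add_sub_eq_mul_klFun hq.ne', mul_eq_zero,
      klFun_eq_zero_iff (div_nonneg hp hq.le), div_eq_one_iff_eq hq.ne']
    simp [hq.ne']

variable {ι : Type*} [Fintype ι] {p q : ι → ℝ}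

lemma sum_mul_log_sub_sum_mul_log_eq (hsum : ∑ i, p i = ∑ i, q i) :
    ∑ i, p i * log (p i) - ∑ i, p i * log (q i)
      = ∑ i, (p i * (log (p i) - log (q i)) + q i - p i) := by
  simp only [mul_sub, sum_sub_distrib, sum_add_distrib, hsum]
  ring

theorem sum_mul_log_le_sum_mul_log (hp : ∀ i, 0 ≤ p i) (hq : ∀ i, 0 ≤ q i)
    (hsum : ∑ i, p i = ∑ i, q i) (hpq : ∀ i, 0 < p i → 0 < q i) :
    ∑ i, p i * log (q i) ≤ ∑ i, p i * log (p i) := by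
  have := sum_nonneg fun i (_ : i ∈ univ) ↦
    mul_log_sub_log_add_sub_nonneg (hp i) (hq i) (hpq i)
  rw [← sum_mul_log_sub_sum_mul_log_eq hsum] at this
  linarith

theorem sum_mul_log_eq_sum_mul_log_iff (hp : ∀ i, 0 ≤ p i) (hq : ∀ i, 0 ≤ q i)
    (hsum : ∑ i, p i = ∑ i, q i) (hpq : ∀ i, 0 < p i → 0 < q i) :
    ∑ i, p i * log (q i) = ∑ i, p i * log (p i) ↔ p = q := by
  rw [eq_comm, ← sub_eq_zero, sum_mul_log_sub_sum_mul_log_eq hsum,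
    sum_eq_zero_iff_of_nonneg fun i _ ↦ mul_log_sub_log_add_sub_nonneg (hp i) (hq i) (hpq i),
    funext_iff]
  simp only [mem_univ, true_implies, mul_log_sub_log_add_sub_eq_zero_iff (hp _) (hq _) (hpq _)]

end Gibbs

section Entropy

variable {α : Type*} [Fintype α] {p q : α → ℝ}

lemma H_eq_neg_sum_mul_log_div (p : α → ℝ) : H p = -(∑ x, p x * log (p x)) / log 2 := by
  simp only [H, logb, mul_div_assoc', sum_div, neg_div]

lemma H_le_H_iff : H p ≤ H q ↔ ∑ x, q x * log (q x) ≤ ∑ x, p x * log (p x) := by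
  rw [H_eq_neg_sum_mul_log_div, H_eq_neg_sum_mul_log_div,
    div_le_div_iff_of_pos_right (log_pos one_lt_two), neg_le_neg_iff]

lemma H_eq_H_iff : H p = H q ↔ ∑ x, p x * log (p x) = ∑ x, q x * log (q x) := by
  rw [H_eq_neg_sum_mul_log_div, H_eq_neg_sum_mul_log_div,
    div_left_inj' (log_pos one_lt_two).ne', neg_inj]

end Entropy

section Marginal

lemma Finset.piecewise_eq_iff {ι : Type*} {β : ι → Type*} (s : Finset ι)
    [∀ j, Decidable (j ∈ s)] (x y w : ∀ i, β i) :
    s.piecewise x y = w ↔ s.piecewise w y = w ∧ ∀ i ∈ s, x i = w i := by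
  constructor
  · rintro rfl
    refine ⟨?_, fun i hi ↦ (s.piecewise_eq_of_mem x y hi).symm⟩
    ext i
    by_cases hi : i ∈ s <;> simp [hi]
  · rintro ⟨hw, hxw⟩
    rw [← hw]
    ext i
    by_cases hi : i ∈ s <;> simp [hi, hxw]

variable {M : ℕ} {X : Fin M → Type*} [∀ i, Fintype (X i)] [∀ i, DecidableEq (X i)]

lemma sum_filter_piecewise_eq (R : (∀ i, X i) → ℝ) (A : Finset (Fin M)) (y w : ∀ i, X i) :
    ∑ x with A.piecewise x y = w, R x = if A.piecewise w y = w then margA R A w else 0 := by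
  split_ifs with hw
  · rw [margA, sum_filter]
    refine sum_congr rfl fun x _ ↦ ?_
    simp only [A.piecewise_eq_iff x y w, hw, true_and]
  · exact sum_eq_zero fun x hx ↦ absurd ((A.piecewise_eq_iff x y w).1 (mem_filter.1 hx).2).1 hw

theorem sum_mul_eq_of_margA_eq (P Q : (∀ i, X i) → ℝ) (A : Finset (Fin M))
    (hm : ∀ z, margA P A z = margA Q A z) (h : (∀ i, X i) → ℝ)
    (hh : ∀ x y, (∀ i ∈ A, x i = y i) → h x = h y) :
    ∑ x, P x * h x = ∑ x, Q x * h x := by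
  rcases isEmpty_or_nonempty (∀ i, X i) with _ | ⟨⟨y⟩⟩
  · simp
  -- `A.piecewise · y` picks one representative per class of agreement on `A`, and its fibres
  -- over the representatives are the classes that `margA` sums over.
  have fiberwise : ∀ R : (∀ i, X i) → ℝ,
      ∑ x, R x * h x = ∑ w, (∑ x with A.piecewise x y = w, R x) * h w := by
    intro R
    rw [← sum_fiberwise univ (A.piecewise · y)]
    refine sum_congr rfl fun w _ ↦ ?_
    rw [sum_mul]
    refine sum_congr rfl fun x hx ↦ ?_
    rw [← (mem_filter.1 hx).2, hh x _ fun i hi ↦ (A.piecewise_eq_of_mem x y hi).symm]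
  rw [fiberwise P, fiberwise Q]
  simp only [sum_filter_piecewise_eq, hm]

end Marginal

lemma sum_mul_log_eq_sum_sum_mul_log_of_eq_prod {ι κ : Type*} [Fintype ι] [Fintype κ]
    (R Q : ι → ℝ) (f : κ → ι → ℝ) (hQ : ∀ x, Q x = ∏ k, f k x)
    (hRQ : ∀ x, R x ≠ 0 → Q x ≠ 0) :
    ∑ x, R x * log (Q x) = ∑ k, ∑ x, R x * log (f k x) := by
  rw [sum_comm]
  refine sum_congr rfl fun x _ ↦ ?_
  by_cases hR : R x = 0
  · simp [hR]
  · have hf : ∀ k ∈ univ, f k x ≠ 0 := prod_ne_zero_iff.1 (hQ x ▸ hRQ x hR)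
    rw [hQ x, log_prod hf, mul_sum]

theorem stmt_4_general {M r : ℕ} {X : Fin M → Type*} [∀ i, Fintype (X i)]
    [∀ i, DecidableEq (X i)]
    (Q : (∀ i, X i) → ℝ) (hQ0 : ∀ x, 0 ≤ Q x) (hQ1 : ∑ x, Q x = 1)
    (A : Fin r → Finset (Fin M)) (f : Fin r → (∀ i, X i) → ℝ)
    (hfloc : ∀ k x y, (∀ i ∈ A k, x i = y i) → f k x = f k y)
    (hQprod : ∀ x, Q x = ∏ k, f k x)
    (P : (∀ i, X i) → ℝ) (hP0 : ∀ x, 0 ≤ P x) (hP1 : ∑ x, P x = 1)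
    (hmarg : ∀ k z, margA P (A k) z = margA Q (A k) z)
    (hac : ∀ x, 0 < P x → 0 < Q x) :
    H P ≤ H Q ∧ (H P = H Q ↔ P = Q) := by
  have hcross : ∑ x, P x * log (Q x) = ∑ x, Q x * log (Q x) := by
    have hPQ : ∀ x, P x ≠ 0 → Q x ≠ 0 := fun x hx ↦ (hac x ((hP0 x).lt_of_ne' hx)).ne'
    rw [sum_mul_log_eq_sum_sum_mul_log_of_eq_prod P Q f hQprod hPQ,
      sum_mul_log_eq_sum_sum_mul_log_of_eq_prod Q Q f hQprod fun _ ↦ id]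
    exact sum_congr rfl fun k _ ↦ sum_mul_eq_of_margA_eq P Q (A k) (hmarg k) _
      fun x y hxy ↦ by rw [hfloc k x y hxy]
  have hsum : ∑ x, P x = ∑ x, Q x := hP1.trans hQ1.symm
  rw [H_le_H_iff, H_eq_H_iff, ← hcross, eq_comm]
  exact ⟨sum_mul_log_le_sum_mul_log hP0 hQ0 hsum hac,
    sum_mul_log_eq_sum_mul_log_iff hP0 hQ0 hsum hac⟩

/-- A product-form distribution `Q(x) = ∏_k f_k(x_{A_k})` satisfying the
marginal constraints maximizes entropy among all distributions `P` with the
same marginals on the `A_k`: `S[P] ≤ S[Q]`, with equality iff `P = Q`. -/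
theorem stmt_4 {M r : ℕ} {X : Fin M → Type*} [∀ i, Fintype (X i)]
    [∀ i, DecidableEq (X i)]
    (Q : (∀ i, X i) → ℝ) (hQ0 : ∀ x, 0 ≤ Q x) (hQ1 : ∑ x, Q x = 1)
    (A : Fin r → Finset (Fin M)) (f : Fin r → (∀ i, X i) → ℝ)
    (hf0 : ∀ k x, 0 ≤ f k x)
    (hfloc : ∀ k x y, (∀ i ∈ A k, x i = y i) → f k x = f k y)
    (hQprod : ∀ x, Q x = ∏ k, f k x)
    (P : (∀ i, X i) → ℝ) (hP0 : ∀ x, 0 ≤ P x) (hP1 : ∑ x, P x = 1)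
    (hmarg : ∀ k z, margA P (A k) z = margA Q (A k) z)
    (hac : ∀ x, 0 < P x → 0 < Q x) :
    H P ≤ H Q ∧ (H P = H Q ↔ P = Q) :=
  stmt_4_general Q hQ0 hQ1 A f hfloc hQprod P hP0 hP1 hmarg hac
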